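/- arXiv:math/0301152 — 3 statements merged into one kernel-verified Lean document; each statement's English description precedes it below -/
import Mathlib

section
/- Approximation operator bound: with weights w_j = (x_{j+1}−x_{j−1})/2 and δ < 1/M, the operator S on the space P_M of cosine polynomials of degree ≤ M defined by Sp = P(Σ_{j=1}^r p(x_j) χ_j), where P is the orthogonal projection of L²([0,1]) onto P_M and χ_j is the indicator of [y_{j−1}, y_j] with y_j = (x_j + x_{j+1})/2, satisfies ‖p − Sp‖₂ ≤ δM ‖p‖₂ for all p ∈ P_M; hence S is invertible on P_M with ‖S^{-1}‖ ≤ (1−δM)^{-1}. -/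
/-!
Since `Sp` is the best approximation in `P_M` of the step function `g = Σ p(x_j) χ_j` and
`p ∈ P_M`, we have `‖p - Sp‖₂ ≤ ‖p - g‖₂`. On the cell `[y_{j-1}, y_j]` the
function `p - g = p - p(x_j)` vanishes at `x_j`, which lies within `δ/2` of both ends, so
Wirtinger's inequality (for functions vanishing at one endpoint, proved via Picone's identity with
the weight `sin`) bounds its square integral by `(δ/π)²` times that of `p'`. Summing over the cells
and applying Bernstein's inequality `‖p'‖₂ ≤ πM‖p‖₂` (Parseval) gives `‖p - Sp‖₂ ≤ δM‖p‖₂`;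
the lower bound for `‖Sp‖₂` is the reverse triangle inequality in `L²`.
-/

open Real MeasureTheory Finset Filter Topology

theorem mul_integral_sq_le_integral_deriv_sq {f f' φ φ' : ℝ → ℝ} {a b κ : ℝ} (hab : a ≤ b)
    (hf : ∀ t, HasDerivAt f (f' t) t) (hf' : Continuous f')
    (hφ : ∀ t, HasDerivAt φ (φ' t) t) (hφ' : ∀ t, HasDerivAt φ' (-κ * φ t) t)
    (hpos : ∀ t ∈ Set.Icc a b, 0 < φ t)
    (hbdry : φ' a / φ a * f a ^ 2 ≤ φ' b / φ b * f b ^ 2) :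
    κ * ∫ t in a..b, f t ^ 2 ≤ ∫ t in a..b, f' t ^ 2 := by
  have hfc : Continuous f := continuous_iff_continuousAt.2 fun t => (hf t).continuousAt
  have hφc : Continuous φ := continuous_iff_continuousAt.2 fun t => (hφ t).continuousAt
  have hφ'c : Continuous φ' := continuous_iff_continuousAt.2 fun t => (hφ' t).continuousAt
  have hne : ∀ t ∈ Set.uIcc a b, φ t ≠ 0 := fun t ht =>
    (hpos t (Set.uIcc_of_le hab ▸ ht)).ne'
  set w := fun t => φ' t / φ t
  -- Picone's identity: since `φ'' = -κ φ`, `(w f²)' = f'² - κ f² - (f' - w f)²` for `w = φ' / φ`.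
  have hderiv : ∀ t ∈ Set.uIcc a b, HasDerivAt (fun t => w t * f t ^ 2)
      (f' t ^ 2 - κ * f t ^ 2 - (f' t - w t * f t) ^ 2) t := by
    intro t ht
    refine (((hφ' t).div (hφ t) (hne t ht)).fun_mul ((hf t).fun_pow 2)).congr_deriv ?_
    have hφt := hne t ht
    simp only [w, Pi.div_apply]
    field_simp
    ring
  have hw : ContinuousOn w (Set.uIcc a b) := hφ'c.continuousOn.div hφc.continuousOn hne
  have hsq_int : ∀ g : ℝ → ℝ, ContinuousOn g (Set.uIcc a b) →
      IntervalIntegrable (fun t => g t ^ 2) volume a b :=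
    fun g hg => (hg.pow 2).intervalIntegrable
  have hf'_int := hsq_int f' hf'.continuousOn
  have hf_int := (hsq_int f hfc.continuousOn).const_mul κ
  have hr_int := hsq_int (fun t => f' t - w t * f t) (by fun_prop)
  have hftc := intervalIntegral.integral_eq_sub_of_hasDerivAt hderiv
    ((hf'_int.sub hf_int).sub hr_int)
  rw [intervalIntegral.integral_sub (hf'_int.sub hf_int) hr_int,
    intervalIntegral.integral_sub hf'_int hf_int, intervalIntegral.integral_const_mul] at hftc
  have hr_nonneg : 0 ≤ ∫ t in a..b, (f' t - w t * f t) ^ 2 :=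
    intervalIntegral.integral_nonneg hab fun t _ => sq_nonneg _
  linarith

theorem integral_sq_le_of_eq_zero_left {f f' : ℝ → ℝ} {a b : ℝ} (hab : a ≤ b)
    (hf : ∀ t, HasDerivAt f (f' t) t) (hf' : Continuous f') (ha : f a = 0) :
    ∫ t in a..b, f t ^ 2 ≤ (2 * (b - a) / π) ^ 2 * ∫ t in a..b, f' t ^ 2 := by
  suffices h : ∀ η > 0,
      ∫ t in a..b, f t ^ 2 ≤ (2 * (b - a + η) / π) ^ 2 * ∫ t in a..b, f' t ^ 2 by
    have hlim : Tendsto (fun η => (2 * (b - a + η) / π) ^ 2 * ∫ t in a..b, f' t ^ 2) (𝓝[>] 0)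
        (𝓝 ((2 * (b - a) / π) ^ 2 * ∫ t in a..b, f' t ^ 2)) := by
      have : Continuous fun η => (2 * (b - a + η) / π) ^ 2 * ∫ t in a..b, f' t ^ 2 := by fun_prop
      simpa using (this.tendsto 0).mono_left nhdsWithin_le_nhds
    exact ge_of_tendsto hlim (eventually_nhdsWithin_of_forall h)
  intro η hη
  -- `sin (c (t - a + η))` is positive on `[a, b]` and flat at `b`; the shift `η` keeps its zero
  -- off the closed interval, at the price of a constant that tends to the optimal one.
  have hL : 0 < b - a + η := by linarith
  set c := π / (2 * (b - a + η)) with hc_def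
  have hcb : c * (b - a + η) = π / 2 := by rw [hc_def]; field_simp
  have harg : ∀ t, HasDerivAt (fun t => c * (t - a + η)) c t := fun t => by
    simpa using (((hasDerivAt_id' t).sub_const a).add_const η).const_mul c
  have hsin : ∀ t, HasDerivAt (fun t => sin (c * (t - a + η))) (c * cos (c * (t - a + η))) t :=
    fun t => ((harg t).sin).congr_deriv (mul_comm _ _)
  have hcos : ∀ t, HasDerivAt (fun t => c * cos (c * (t - a + η)))
      (-c ^ 2 * sin (c * (t - a + η))) t :=
    fun t => (((harg t).cos).const_mul c).congr_deriv (by ring)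
  have hpos : ∀ t ∈ Set.Icc a b, 0 < sin (c * (t - a + η)) := by
    intro t ht
    apply sin_pos_of_pos_of_lt_pi
    · have : 0 < t - a + η := by linarith [ht.1]
      positivity
    · have : c * (t - a + η) ≤ c * (b - a + η) := by gcongr; exact ht.2
      linarith [pi_pos]
  have h := mul_integral_sq_le_integral_deriv_sq hab hf hf' hsin hcos hpos
    (by simp [ha, hcb])
  calc ∫ t in a..b, f t ^ 2 = (2 * (b - a + η) / π) ^ 2 * (c ^ 2 * ∫ t in a..b, f t ^ 2) := by
        rw [hc_def]; field_simp
    _ ≤ (2 * (b - a + η) / π) ^ 2 * ∫ t in a..b, f' t ^ 2 := by gcongr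

theorem integral_sq_le_of_eq_zero_right {f f' : ℝ → ℝ} {a b : ℝ} (hab : a ≤ b)
    (hf : ∀ t, HasDerivAt f (f' t) t) (hf' : Continuous f') (hb : f b = 0) :
    ∫ t in a..b, f t ^ 2 ≤ (2 * (b - a) / π) ^ 2 * ∫ t in a..b, f' t ^ 2 := by
  have h := integral_sq_le_of_eq_zero_left (f := fun t => f (-t)) (f' := fun t => -f' (-t))
    (neg_le_neg hab) (fun t => ((hf (-t)).comp t (hasDerivAt_neg t)).congr_deriv (by ring))
    (hf'.comp continuous_neg).neg (by simpa using hb)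
  simpa [neg_sq, intervalIntegral.integral_comp_neg (fun t => f t ^ 2),
    intervalIntegral.integral_comp_neg (fun t => f' t ^ 2), add_comm, ← sub_eq_add_neg] using h

theorem integral_sq_le_of_eq_zero {f f' : ℝ → ℝ} {a b ξ h : ℝ}
    (hf : ∀ t, HasDerivAt f (f' t) t) (hf' : Continuous f') (hξ : f ξ = 0)
    (haξ : a ≤ ξ) (hξb : ξ ≤ b) (ha : ξ - a ≤ h) (hb : b - ξ ≤ h) :
    ∫ t in a..b, f t ^ 2 ≤ (2 * h / π) ^ 2 * ∫ t in a..b, f' t ^ 2 := by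
  have hint : ∀ g : ℝ → ℝ, Continuous g → ∀ u v : ℝ,
      IntervalIntegrable (fun t => g t ^ 2) volume u v :=
    fun g hg u v => (hg.pow 2).intervalIntegrable u v
  have hfc : Continuous f := continuous_iff_continuousAt.2 fun t => (hf t).continuousAt
  have hconst : ∀ u v, u ≤ v → v - u ≤ h → (2 * (v - u) / π) ^ 2 ≤ (2 * h / π) ^ 2 :=
    fun u v _ _ => by gcongr
  rw [← intervalIntegral.integral_add_adjacent_intervals (hint f hfc a ξ) (hint f hfc ξ b),
    ← intervalIntegral.integral_add_adjacent_intervals (hint f' hf' a ξ) (hint f' hf' ξ b),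
    mul_add]
  gcongr
  · exact (integral_sq_le_of_eq_zero_right haξ hf hf' hξ).trans <|
      mul_le_mul_of_nonneg_right (hconst a ξ haξ ha)
        (intervalIntegral.integral_nonneg haξ fun t _ => sq_nonneg _)
  · exact (integral_sq_le_of_eq_zero_left hξb hf hf' hξ).trans <|
      mul_le_mul_of_nonneg_right (hconst ξ b hξb hb)
        (intervalIntegral.integral_nonneg hξb fun t _ => sq_nonneg _)

theorem monotoneOn_Iic_of_le_succ {α : Type*} [Preorder α] {y : ℕ → α} {r : ℕ}
    (hy : ∀ i < r, y i ≤ y (i + 1)) : MonotoneOn y (Set.Iic r) := by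
  intro a _ b hb hab
  induction b, hab using Nat.le_induction with
  | base => exact le_rfl
  | succ n hn ih =>
    simp only [Set.mem_Iic] at hb
    exact (ih (Set.mem_Iic.2 (by omega))).trans (hy n (by omega))

noncomputable def stepFn (r : ℕ) (y v : ℕ → ℝ) (t : ℝ) : ℝ :=
  ∑ j ∈ Icc 1 r, v j * Set.indicator (Set.Ioc (y (j - 1)) (y j)) (fun _ => (1 : ℝ)) t

section StepFunction

variable {r : ℕ} {y : ℕ → ℝ}

theorem stepFn_eq_of_mem_Ioc (hy : ∀ i < r, y i ≤ y (i + 1)) (v : ℕ → ℝ) {i : ℕ} (hi : i < r)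
    {t : ℝ} (ht : t ∈ Set.Ioc (y i) (y (i + 1))) : stepFn r y v t = v (i + 1) := by
  have hmono := monotoneOn_Iic_of_le_succ hy
  rw [stepFn, sum_eq_single_of_mem (i + 1) (by simp; omega), Nat.add_sub_cancel,
    Set.indicator_of_mem ht, mul_one]
  intro j hj hji
  rw [mem_Icc] at hj
  rw [Set.indicator_of_notMem, mul_zero]
  rintro ⟨hlow, hhigh⟩
  rcases lt_or_gt_of_ne hji with hlt | hgt
  · have : y j ≤ y i := hmono (Set.mem_Iic.2 hj.2) (Set.mem_Iic.2 hi.le) (by omega)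
    linarith [ht.1]
  · have : y (i + 1) ≤ y (j - 1) :=
      hmono (Set.mem_Iic.2 (by omega)) (Set.mem_Iic.2 (by omega)) (by omega)
    linarith [ht.2]

theorem intervalIntegrable_comp_stepFn_of_lt (hy : ∀ i < r, y i ≤ y (i + 1)) (v : ℕ → ℝ)
    {Φ : ℝ → ℝ → ℝ} (hΦ : ∀ u, Continuous (Φ u)) {i : ℕ} (hi : i < r) :
    IntervalIntegrable (fun t => Φ (stepFn r y v t) t) volume (y i) (y (i + 1)) := by
  rw [intervalIntegrable_iff_integrableOn_Ioc_of_le (hy i hi)]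
  exact (hΦ (v (i + 1))).integrableOn_Ioc.congr_fun
    (fun t ht => by rw [stepFn_eq_of_mem_Ioc hy v hi ht]) measurableSet_Ioc

theorem intervalIntegrable_comp_stepFn (hy : ∀ i < r, y i ≤ y (i + 1)) (v : ℕ → ℝ)
    {Φ : ℝ → ℝ → ℝ} (hΦ : ∀ u, Continuous (Φ u)) :
    IntervalIntegrable (fun t => Φ (stepFn r y v t) t) volume (y 0) (y r) :=
  IntervalIntegrable.trans_iterate fun _ hi => intervalIntegrable_comp_stepFn_of_lt hy v hΦ hi

theorem integral_sq_sub_stepFn_le {p p' : ℝ → ℝ} (hp : ∀ t, HasDerivAt p (p' t) t)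
    (hp' : Continuous p') {x : ℕ → ℝ} {δ : ℝ} (hx : ∀ j ≤ r, x j ≤ x (j + 1))
    (hy : ∀ j ≤ r, y j = (x j + x (j + 1)) / 2) (hδ : ∀ j ≤ r, x (j + 1) - x j ≤ δ) :
    ∫ t in y 0..y r, (p t - stepFn r y (fun j => p (x j)) t) ^ 2 ≤
      (δ / π) ^ 2 * ∫ t in y 0..y r, p' t ^ 2 := by
  have hcell : ∀ i < r, y i ≤ x (i + 1) ∧ x (i + 1) ≤ y (i + 1) ∧
      x (i + 1) - y i ≤ δ / 2 ∧ y (i + 1) - x (i + 1) ≤ δ / 2 := by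
    intro i hi
    rw [hy i (by omega), hy (i + 1) (by omega)]
    have := hx i (by omega)
    have := hx (i + 1) (by omega)
    have := hδ i (by omega)
    have := hδ (i + 1) (by omega)
    refine ⟨?_, ?_, ?_, ?_⟩ <;> linarith
  have hmono : ∀ i < r, y i ≤ y (i + 1) := fun i hi => (hcell i hi).1.trans (hcell i hi).2.1
  have hpc : Continuous p := continuous_iff_continuousAt.2 fun t => (hp t).continuousAt
  have hint : ∀ i < r, IntervalIntegrable (fun t => (p t - stepFn r y (fun j => p (x j)) t) ^ 2)
      volume (y i) (y (i + 1)) := fun i hi =>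
    intervalIntegrable_comp_stepFn_of_lt hmono _ (Φ := fun u t => (p t - u) ^ 2) (by fun_prop) hi
  rw [← intervalIntegral.sum_integral_adjacent_intervals hint,
    ← intervalIntegral.sum_integral_adjacent_intervals (f := fun t => p' t ^ 2) fun i _ =>
      (hp'.pow 2).intervalIntegrable _ _, mul_sum]
  refine sum_le_sum fun i hi => ?_
  rw [mem_range] at hi
  obtain ⟨hxl, hxr, hl, hr⟩ := hcell i hi
  have hpiece : ∫ t in y i..y (i + 1), (p t - stepFn r y (fun j => p (x j)) t) ^ 2 =
      ∫ t in y i..y (i + 1), (p t - p (x (i + 1))) ^ 2 := by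
    rw [intervalIntegral.integral_of_le (hmono i hi), intervalIntegral.integral_of_le (hmono i hi)]
    exact setIntegral_congr_fun measurableSet_Ioc fun t ht => by
      rw [stepFn_eq_of_mem_Ioc hmono _ hi ht]
  rw [hpiece]
  have h := integral_sq_le_of_eq_zero (fun t => (hp t).sub_const (p (x (i + 1)))) hp'
    (sub_self _) hxl hxr hl hr
  rwa [show 2 * (δ / 2) = δ by ring] at h

end StepFunction

section IntervalL2

variable {a b : ℝ}

theorem integral_sq_sub_le_of_integral_mul_eq_zero {p q g : ℝ → ℝ} (hab : a ≤ b)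
    (hpg : IntervalIntegrable (fun t => (p t - g t) ^ 2) volume a b)
    (hgq : IntervalIntegrable (fun t => (g t - q t) ^ 2) volume a b)
    (hmul : IntervalIntegrable (fun t => (g t - q t) * (p t - q t)) volume a b)
    (horth : ∫ t in a..b, (g t - q t) * (p t - q t) = 0) :
    ∫ t in a..b, (p t - q t) ^ 2 ≤ ∫ t in a..b, (p t - g t) ^ 2 := by
  have hsplit : ∫ t in a..b, (p t - q t) ^ 2 = (∫ t in a..b, (p t - g t) ^ 2) -
      (∫ t in a..b, (g t - q t) ^ 2) + 2 * ∫ t in a..b, (g t - q t) * (p t - q t) := by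
    rw [← intervalIntegral.integral_sub hpg hgq, ← intervalIntegral.integral_const_mul,
      ← intervalIntegral.integral_add (hpg.sub hgq) (hmul.const_mul 2)]
    congr 1 with t
    ring
  have hnonneg : 0 ≤ ∫ t in a..b, (g t - q t) ^ 2 :=
    intervalIntegral.integral_nonneg hab fun t _ => sq_nonneg _
  linarith

theorem integral_mul_add_sq {u v : ℝ → ℝ} (hu : Continuous u) (hv : Continuous v) (s : ℝ) :
    ∫ t in a..b, (s * u t + v t) ^ 2 = (∫ t in a..b, u t ^ 2) * (s * s) +
      2 * (∫ t in a..b, u t * v t) * s + ∫ t in a..b, v t ^ 2 := by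
  have hint : ∀ f : ℝ → ℝ, Continuous f → IntervalIntegrable f volume a b :=
    fun f hf => hf.intervalIntegrable a b
  calc ∫ t in a..b, (s * u t + v t) ^ 2
      = ∫ t in a..b, ((s * s) * u t ^ 2 + (2 * s) * (u t * v t) + v t ^ 2) := by
        congr 1 with t; ring
    _ = _ := by
        rw [intervalIntegral.integral_add (hint _ (by fun_prop)) (hint _ (by fun_prop)),
          intervalIntegral.integral_add (hint _ (by fun_prop)) (hint _ (by fun_prop)),
          intervalIntegral.integral_const_mul, intervalIntegral.integral_const_mul]
        ring

theorem sq_integral_mul_le {u v : ℝ → ℝ} (hab : a ≤ b) (hu : Continuous u) (hv : Continuous v) :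
    (∫ t in a..b, u t * v t) ^ 2 ≤ (∫ t in a..b, u t ^ 2) * ∫ t in a..b, v t ^ 2 := by
  have hquad : ∀ s : ℝ, 0 ≤ (∫ t in a..b, u t ^ 2) * (s * s) +
      2 * (∫ t in a..b, u t * v t) * s + ∫ t in a..b, v t ^ 2 := fun s =>
    integral_mul_add_sq hu hv s ▸ intervalIntegral.integral_nonneg hab fun t _ => sq_nonneg _
  have := discrim_le_zero hquad
  rw [discrim] at this
  linarith

theorem one_sub_sq_mul_integral_sq_le {u v : ℝ → ℝ} {ε : ℝ} (hab : a ≤ b) (hu : Continuous u)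
    (hv : Continuous v) (hε : 0 ≤ ε) (hε1 : ε ≤ 1)
    (h : ∫ t in a..b, (u t - v t) ^ 2 ≤ ε ^ 2 * ∫ t in a..b, u t ^ 2) :
    (1 - ε) ^ 2 * ∫ t in a..b, u t ^ 2 ≤ ∫ t in a..b, v t ^ 2 := by
  have hcs := sq_integral_mul_le hab hu hv
  have hexp := integral_mul_add_sq (a := a) (b := b) hv hu (-1)
  simp only [neg_one_mul, neg_add_eq_sub, mul_comm (v _) (u _)] at hexp
  have hB : 0 ≤ ∫ t in a..b, u t ^ 2 := intervalIntegral.integral_nonneg hab fun t _ => sq_nonneg _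
  have hC : 0 ≤ ∫ t in a..b, v t ^ 2 := intervalIntegral.integral_nonneg hab fun t _ => sq_nonneg _
  set B := ∫ t in a..b, u t ^ 2
  set C := ∫ t in a..b, v t ^ 2
  set s := ∫ t in a..b, u t * v t
  have h2s : (1 - ε ^ 2) * B + C ≤ 2 * s := by linarith
  have hpos : 0 ≤ (1 - ε ^ 2) * B + C := by
    nlinarith [mul_nonneg (show 0 ≤ 1 - ε ^ 2 by nlinarith) hB]
  have hsq : ((1 - ε ^ 2) * B + C) ^ 2 ≤ 4 * (B * C) := by
    nlinarith [pow_le_pow_left₀ hpos h2s 2]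
  by_contra! hlt
  nlinarith [mul_pos (sub_pos.2 hlt) (show 0 < (1 + ε) ^ 2 * B - C by nlinarith)]

end IntervalL2

theorem integral_sq_sum_of_orthogonal {ι : Type*} [DecidableEq ι] (s : Finset ι) (b : ι → ℝ)
    {φ : ι → ℝ → ℝ} {κ u v : ℝ} (hφ : ∀ i, Continuous (φ i))
    (horth : ∀ i ∈ s, ∀ j ∈ s, ∫ t in u..v, φ i t * φ j t = if i = j then κ else 0) :
    ∫ t in u..v, (∑ i ∈ s, b i * φ i t) ^ 2 = κ * ∑ i ∈ s, b i ^ 2 := by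
  have hexp : ∀ t, (∑ i ∈ s, b i * φ i t) ^ 2 =
      ∑ i ∈ s, ∑ j ∈ s, b i * b j * (φ i t * φ j t) := fun t => by
    rw [sq, sum_mul_sum]
    exact sum_congr rfl fun i _ => sum_congr rfl fun j _ => by ring
  have hint : ∀ i j, IntervalIntegrable (fun t => b i * b j * (φ i t * φ j t)) volume u v :=
    fun i j => ((hφ i).mul (hφ j)).intervalIntegrable _ _ |>.const_mul _
  simp only [hexp]
  rw [intervalIntegral.integral_finsetSum
    (f := fun i t => ∑ j ∈ s, b i * b j * (φ i t * φ j t)) fun i _ =>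
      (by fun_prop : Continuous _).intervalIntegrable _ _, mul_sum]
  refine sum_congr rfl fun i hi => ?_
  rw [intervalIntegral.integral_finsetSum fun j _ => hint i j]
  simp only [intervalIntegral.integral_const_mul]
  rw [sum_congr rfl fun j hj => by rw [horth i hi j hj]]
  simp [hi, sq, mul_comm]

theorem integral_cos_pi_int_mul (m : ℤ) :
    ∫ t in (0 : ℝ)..1, cos (π * m * t) = if m = 0 then 1 else 0 := by
  split_ifs with hm
  · simp [hm]
  · have hπm : π * m ≠ 0 := mul_ne_zero pi_ne_zero (Int.cast_ne_zero.2 hm)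
    rw [intervalIntegral.integral_comp_mul_left (fun t => cos t) hπm, integral_cos]
    simp [mul_comm π, sin_int_mul_pi]

theorem integral_cos_mul_cos (k l : ℕ) :
    ∫ t in (0 : ℝ)..1, cos (π * k * t) * cos (π * l * t) =
      ((if k = l then 1 else 0) + (if k + l = 0 then 1 else 0)) / 2 := by
  have h : ∀ t, cos (π * k * t) * cos (π * l * t) =
      (cos (π * ((k - l : ℤ) : ℝ) * t) + cos (π * ((k + l : ℤ) : ℝ) * t)) / 2 := by
    intro t
    push_cast
    rw [show π * (k - l) * t = π * k * t - π * l * t by ring,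
      show π * (k + l) * t = π * k * t + π * l * t by ring, cos_sub, cos_add]
    ring
  simp_rw [h]
  rw [intervalIntegral.integral_div,
    intervalIntegral.integral_add (Continuous.intervalIntegrable (by fun_prop) _ _)
      (Continuous.intervalIntegrable (by fun_prop) _ _),
    integral_cos_pi_int_mul, integral_cos_pi_int_mul]
  simp only [sub_eq_zero, Nat.cast_inj, ← Nat.cast_add, Nat.cast_eq_zero]

theorem integral_sin_mul_sin (k l : ℕ) :
    ∫ t in (0 : ℝ)..1, sin (π * k * t) * sin (π * l * t) =
      ((if k = l then 1 else 0) - (if k + l = 0 then 1 else 0)) / 2 := by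
  have h : ∀ t, sin (π * k * t) * sin (π * l * t) =
      (cos (π * ((k - l : ℤ) : ℝ) * t) - cos (π * ((k + l : ℤ) : ℝ) * t)) / 2 := by
    intro t
    push_cast
    rw [show π * (k - l) * t = π * k * t - π * l * t by ring,
      show π * (k + l) * t = π * k * t + π * l * t by ring, cos_sub, cos_add]
    ring
  simp_rw [h]
  rw [intervalIntegral.integral_div,
    intervalIntegral.integral_sub (Continuous.intervalIntegrable (by fun_prop) _ _)
      (Continuous.intervalIntegrable (by fun_prop) _ _),
    integral_cos_pi_int_mul, integral_cos_pi_int_mul]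
  simp only [sub_eq_zero, Nat.cast_inj, ← Nat.cast_add, Nat.cast_eq_zero]

noncomputable def cosBasis (k : ℕ) (t : ℝ) : ℝ := if k = 0 then 1 / √2 else cos (π * k * t)

theorem continuous_cosBasis (k : ℕ) : Continuous (cosBasis k) := by
  unfold cosBasis
  split_ifs <;> fun_prop

theorem integral_cosBasis_mul_cosBasis (k l : ℕ) :
    ∫ t in (0 : ℝ)..1, cosBasis k t * cosBasis l t = if k = l then 1 / 2 else 0 := by
  have hcos : ∀ m : ℕ, m ≠ 0 → ∫ t in (0 : ℝ)..1, cos (π * m * t) = 0 := fun m hm => by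
    simpa [hm] using integral_cos_pi_int_mul m
  unfold cosBasis
  rcases eq_or_ne k 0 with rfl | hk <;> rcases eq_or_ne l 0 with rfl | hl
  · simp [← mul_inv, mul_self_sqrt zero_le_two]
  · simp [hl, Ne.symm hl, hcos l hl]
  · simp [hk, hcos k hk]
  · simp only [hk, hl, if_false, integral_cos_mul_cos, add_eq_zero, and_false, add_zero]
    split_ifs <;> norm_num

noncomputable def cosPoly (M : ℕ) (c : ℕ → ℝ) (t : ℝ) : ℝ :=
  c 0 / √2 + ∑ k ∈ Icc 1 M, c k * cos (π * k * t)

noncomputable def cosPolyDeriv (M : ℕ) (c : ℕ → ℝ) (t : ℝ) : ℝ :=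
  ∑ k ∈ Icc 1 M, -(π * k * c k) * sin (π * k * t)

section CosPoly

variable (M : ℕ) (c : ℕ → ℝ)

theorem cosPoly_eq_sum_cosBasis (t : ℝ) :
    cosPoly M c t = ∑ k ∈ insert 0 (Icc 1 M), c k * cosBasis k t := by
  rw [sum_insert (by simp), cosPoly, cosBasis, if_pos rfl, mul_one_div]
  congr 1
  exact sum_congr rfl fun k hk => by
    rw [cosBasis, if_neg (by simp at hk; omega)]

theorem cosPoly_sub (d : ℕ → ℝ) (t : ℝ) :
    cosPoly M c t - cosPoly M d t = cosPoly M (c - d) t := by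
  simp only [cosPoly, Pi.sub_apply, sub_mul, sum_sub_distrib]
  ring

theorem hasDerivAt_cosPoly (t : ℝ) : HasDerivAt (cosPoly M c) (cosPolyDeriv M c t) t := by
  refine (HasDerivAt.fun_sum fun k _ => ?_).const_add _
  exact (((hasDerivAt_id' t).const_mul (π * k)).cos.const_mul (c k)).congr_deriv (by ring)

theorem continuous_cosPolyDeriv : Continuous (cosPolyDeriv M c) := by
  unfold cosPolyDeriv
  fun_prop

theorem continuous_cosPoly : Continuous (cosPoly M c) := by
  unfold cosPoly
  fun_prop

theorem integral_cosPoly_sq :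
    ∫ t in (0 : ℝ)..1, cosPoly M c t ^ 2 = 1 / 2 * ∑ k ∈ insert 0 (Icc 1 M), c k ^ 2 := by
  simp only [cosPoly_eq_sum_cosBasis]
  exact integral_sq_sum_of_orthogonal _ _ continuous_cosBasis
    fun k _ l _ => integral_cosBasis_mul_cosBasis k l

theorem integral_cosPolyDeriv_sq :
    ∫ t in (0 : ℝ)..1, cosPolyDeriv M c t ^ 2 = 1 / 2 * ∑ k ∈ Icc 1 M, (π * k * c k) ^ 2 := by
  simp only [cosPolyDeriv]
  rw [integral_sq_sum_of_orthogonal (κ := 1 / 2) _ _ (fun k => by fun_prop) fun k hk l hl => ?_]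
  · simp only [neg_sq]
  · rw [integral_sin_mul_sin]
    rw [mem_Icc] at hk hl
    rw [if_neg (by omega : k + l ≠ 0)]
    split_ifs <;> norm_num

theorem integral_cosPolyDeriv_sq_le :
    ∫ t in (0 : ℝ)..1, cosPolyDeriv M c t ^ 2 ≤
      (π * M) ^ 2 * ∫ t in (0 : ℝ)..1, cosPoly M c t ^ 2 := by
  rw [integral_cosPolyDeriv_sq, integral_cosPoly_sq, sum_insert (by simp)]
  calc 1 / 2 * ∑ k ∈ Icc 1 M, (π * k * c k) ^ 2
      ≤ 1 / 2 * ∑ k ∈ Icc 1 M, (π * M) ^ 2 * c k ^ 2 := by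
        gcongr with k hk
        rw [mul_pow]
        gcongr
        exact_mod_cast (mem_Icc.1 hk).2
    _ = (π * M) ^ 2 * (1 / 2 * ∑ k ∈ Icc 1 M, c k ^ 2) := by rw [← mul_sum]; ring
    _ ≤ (π * M) ^ 2 * (1 / 2 * (c 0 ^ 2 + ∑ k ∈ Icc 1 M, c k ^ 2)) := by
        gcongr
        exact le_add_of_nonneg_left (sq_nonneg _)

end CosPoly

theorem integral_sq_cosPoly_sub_le {M r : ℕ} {x y : ℕ → ℝ} {δ : ℝ} {c d : ℕ → ℝ}
    (hx : ∀ j ≤ r, x j ≤ x (j + 1)) (hy : ∀ j ≤ r, y j = (x j + x (j + 1)) / 2)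
    (hδ : ∀ j ≤ r, x (j + 1) - x j ≤ δ) (hy0 : y 0 = 0) (hyr : y r = 1)
    (hproj : ∀ e : ℕ → ℝ, ∫ t in (0 : ℝ)..1,
      (stepFn r y (fun j => cosPoly M c (x j)) t - cosPoly M d t) * cosPoly M e t = 0) :
    ∫ t in (0 : ℝ)..1, (cosPoly M c t - cosPoly M d t) ^ 2 ≤
      (δ * M) ^ 2 * ∫ t in (0 : ℝ)..1, cosPoly M c t ^ 2 := by
  have hstep : ∀ i < r, y i ≤ y (i + 1) := fun i hi => by
    linarith [hy i (by omega), hy (i + 1) (by omega), hx i (by omega), hx (i + 1) (by omega)]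
  have hint : ∀ Φ : ℝ → ℝ → ℝ, (∀ u, Continuous (Φ u)) → IntervalIntegrable
      (fun t => Φ (stepFn r y (fun j => cosPoly M c (x j)) t) t) volume 0 1 := fun Φ hΦ =>
    hy0 ▸ hyr ▸ intervalIntegrable_comp_stepFn hstep _ hΦ
  have hpc := continuous_cosPoly M c
  have hqc := continuous_cosPoly M d
  have hbest := integral_sq_sub_le_of_integral_mul_eq_zero zero_le_one
    (hint (fun u t => (cosPoly M c t - u) ^ 2) (by fun_prop))
    (hint (fun u t => (u - cosPoly M d t) ^ 2) (by fun_prop))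
    (hint (fun u t => (u - cosPoly M d t) * (cosPoly M c t - cosPoly M d t)) (by fun_prop))
    (by simpa only [cosPoly_sub] using hproj (c - d))
  have hsample := integral_sq_sub_stepFn_le (hasDerivAt_cosPoly M c)
    (continuous_cosPolyDeriv M c) hx hy hδ
  rw [hy0, hyr] at hsample
  calc _ ≤ _ := hbest
    _ ≤ _ := hsample
    _ ≤ (δ / π) ^ 2 * ((π * M) ^ 2 * ∫ t in (0 : ℝ)..1, cosPoly M c t ^ 2) := by
      gcongr
      exact integral_cosPolyDeriv_sq_le M c
    _ = _ := by field_simp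

theorem approximation_operator_bound_general (M r : ℕ) (x y : ℕ → ℝ) (δ : ℝ)
    (hmono : ∀ j, 1 ≤ j → j < r → x j < x (j + 1))
    (hx1 : x 1 = 0) (hxr : x r = 1)
    (hx0 : x 0 = -x 1) (hxr1 : x (r + 1) = 2 - x r)
    (hy : ∀ j ≤ r, y j = (x j + x (j + 1)) / 2)
    (hδ : ∀ j ≤ r, x (j + 1) - x j ≤ δ)
    (hgap : δ < 1 / M)
    (P : (ℕ → ℝ) → ℝ → ℝ)
    (hP : ∀ (c : ℕ → ℝ) (t : ℝ), P c t = c 0 / Real.sqrt 2 +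
      ∑ k ∈ Finset.Icc 1 M, c k * Real.cos (Real.pi * k * t))
    (c d : ℕ → ℝ) (g : ℝ → ℝ)
    (hg : ∀ t : ℝ, g t = ∑ j ∈ Finset.Icc 1 r,
      P c (x j) * Set.indicator (Set.Ioc (y (j - 1)) (y j)) (fun _ => (1:ℝ)) t)
    (hproj : ∀ e : ℕ → ℝ, (∫ t in (0:ℝ)..1, (g t - P d t) * P e t) = 0) :
    (∫ t in (0:ℝ)..1, (P c t - P d t) ^ 2) ≤
        (δ * M) ^ 2 * (∫ t in (0:ℝ)..1, (P c t) ^ 2) ∧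
      (1 - δ * M) ^ 2 * (∫ t in (0:ℝ)..1, (P c t) ^ 2) ≤
        ∫ t in (0:ℝ)..1, (P d t) ^ 2 := by
  obtain rfl : P = cosPoly M := funext fun e => funext (hP e)
  obtain rfl : g = stepFn r y (fun j => cosPoly M c (x j)) := funext hg
  have hx : ∀ j ≤ r, x j ≤ x (j + 1) := by
    intro j hj
    rcases Nat.eq_zero_or_pos j with rfl | hj0
    · simp [hx0, hx1]
    rcases hj.lt_or_eq with hjr | rfl
    · exact (hmono j hj0 hjr).le
    · rw [hxr1, hxr]; norm_num
  have hy0 : y 0 = 0 := by rw [hy 0 (Nat.zero_le r), hx0, hx1]; norm_num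
  have hyr : y r = 1 := by rw [hy r le_rfl, hxr1, hxr]; norm_num
  have hδ0 : 0 ≤ δ := by linarith [hδ 0 (Nat.zero_le r), hx0, hx1]
  have hδM : δ * M ≤ 1 := by
    rcases Nat.eq_zero_or_pos M with rfl | hM
    · simp
    · exact ((lt_div_iff₀ (by positivity)).1 hgap).le
  have hfirst := integral_sq_cosPoly_sub_le hx hy hδ hy0 hyr hproj
  exact ⟨hfirst, one_sub_sq_mul_integral_sq_le zero_le_one (continuous_cosPoly M c)
    (continuous_cosPoly M d) (by positivity) hδM hfirst⟩

/-- Approximation operator bound: for `p ∈ P_M` with coefficients `c`, let `g` be the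
step function `Σ_j p(x_j) χ_j` (with `χ_j` the indicator of `(y_{j−1}, y_j]`) and let
`Sp ∈ P_M`, with coefficients `d`, be the orthogonal projection of `g` onto `P_M`
(characterized by `⟨g − Sp, q⟩ = 0` for all `q ∈ P_M`). Then
`‖p − Sp‖₂ ≤ δM‖p‖₂`, and hence `‖Sp‖₂ ≥ (1 − δM)‖p‖₂`, i.e. `S` is invertible on
`P_M` with `‖S⁻¹‖ ≤ (1 − δM)⁻¹`. -/
theorem approximation_operator_bound (M r : ℕ) (x y w : ℕ → ℝ) (δ : ℝ) (hr : 1 ≤ r)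
    (hmono : ∀ j, 1 ≤ j → j < r → x j < x (j + 1))
    (hx1 : x 1 = 0) (hxr : x r = 1)
    (hx0 : x 0 = -x 1) (hxr1 : x (r + 1) = 2 - x r)
    (hy : ∀ j ≤ r, y j = (x j + x (j + 1)) / 2)
    (hw : ∀ j, 1 ≤ j → j ≤ r → w j = (x (j + 1) - x (j - 1)) / 2)
    (hδ : ∀ j ≤ r, x (j + 1) - x j ≤ δ)
    (hgap : δ < 1 / M)
    (P : (ℕ → ℝ) → ℝ → ℝ)
    (hP : ∀ (c : ℕ → ℝ) (t : ℝ), P c t = c 0 / Real.sqrt 2 +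
      ∑ k ∈ Finset.Icc 1 M, c k * Real.cos (Real.pi * k * t))
    (c d : ℕ → ℝ) (g : ℝ → ℝ)
    (hg : ∀ t : ℝ, g t = ∑ j ∈ Finset.Icc 1 r,
      P c (x j) * Set.indicator (Set.Ioc (y (j - 1)) (y j)) (fun _ => (1:ℝ)) t)
    (hproj : ∀ e : ℕ → ℝ, (∫ t in (0:ℝ)..1, (g t - P d t) * P e t) = 0) :
    (∫ t in (0:ℝ)..1, (P c t - P d t) ^ 2) ≤
        (δ * M) ^ 2 * (∫ t in (0:ℝ)..1, (P c t) ^ 2) ∧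
      (1 - δ * M) ^ 2 * (∫ t in (0:ℝ)..1, (P c t) ^ 2) ≤
        ∫ t in (0:ℝ)..1, (P d t) ^ 2 :=
  approximation_operator_bound_general M r x y δ hmono hx1 hxr hx0 hxr1 hy hδ hgap P hP c d g hg
    hproj
end

section
/- Local Wirtinger estimate for quadrature: for a continuously differentiable function p on [0,1] and the partition by midpoints y_j = (x_j+x_{j+1})/2, Σ_{j=1}^r ∫_{y_{j-1}}^{y_j} |p(x) − p(x_j)|² dx ≤ (δ²/π²) ∫_0^1 |p'(x)|² dx, where δ = max_j (x_{j+1}−x_j). -/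
/-!
On the cell `[y_{j-1}, y_j]` the function `p - p(x_j)` vanishes at `x_j`, which cuts the cell
into two pieces of length at most `δ/2`. On an interval of length `L` a function vanishing at
one endpoint satisfies the one-sided Wirtinger inequality `π² ∫ f² ≤ (2L)² ∫ f'²`, proved with
the Riccati multiplier `c tan (c (b - t))` for `c < π / (2L)`. Summing over the cells, the
right-hand sides add up to `∫₀¹ p'²`.
-/

open Real MeasureTheory intervalIntegral Filter Set Topology

theorem hasDerivAt_mul_tan_mul_sub {c b t : ℝ} (hcos : cos (c * (b - t)) ≠ 0) :
    HasDerivAt (fun s => c * tan (c * (b - s))) (-c ^ 2 - (c * tan (c * (b - t))) ^ 2) t := by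
  have hinner : HasDerivAt (fun s => c * (b - s)) (c * -1) t :=
    ((hasDerivAt_id t).const_sub b).const_mul c
  refine (((hasDerivAt_tan hcos).comp t hinner).const_mul c).congr_deriv ?_
  rw [tan_eq_sin_div_cos]
  field_simp
  linear_combination c ^ 2 * sin_sq_add_cos_sq (c * (b - t))

section Wirtinger

variable {a b : ℝ} {f f' : ℝ → ℝ}

/-- The Riccati solution `m t = c tan (c (b - t))` gives
`(m f²)' = f'² - c² f² - (f' - m f)²`; integrate and use `f a = 0 = m b`. -/
theorem sq_mul_integral_sq_le_of_left_eq_zero (hab : a ≤ b)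
    (hderiv : ∀ t ∈ Icc a b, HasDerivAt f (f' t) t) (hcont : ContinuousOn f' (Icc a b))
    (hfa : f a = 0) {c : ℝ} (hc : 0 < c) (hcb : c * (b - a) < π / 2) :
    c ^ 2 * ∫ t in a..b, f t ^ 2 ≤ ∫ t in a..b, f' t ^ 2 := by
  set m : ℝ → ℝ := fun t => c * tan (c * (b - t))
  have hcos : ∀ t ∈ Icc a b, cos (c * (b - t)) ≠ 0 := fun t ht =>
    (cos_pos_of_mem_Ioo ⟨by nlinarith [ht.2, pi_pos], by nlinarith [ht.1]⟩).ne'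
  have hF : ∀ t ∈ uIcc a b, HasDerivAt (fun t => m t * f t ^ 2)
      (f' t ^ 2 - c ^ 2 * f t ^ 2 - (f' t - m t * f t) ^ 2) t := by
    intro t ht
    rw [uIcc_of_le hab] at ht
    refine ((hasDerivAt_mul_tan_mul_sub (hcos t ht)).mul ((hderiv t ht).pow 2)).congr_deriv ?_
    simp only [m, Pi.pow_apply]
    ring
  have hfc : ContinuousOn f (Icc a b) := fun t ht =>
    (hderiv t ht).continuousAt.continuousWithinAt
  have hmc : ContinuousOn m (Icc a b) := fun t ht =>
    (hasDerivAt_mul_tan_mul_sub (hcos t ht)).continuousAt.continuousWithinAt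
  have hint_f' : IntervalIntegrable (fun t => f' t ^ 2) volume a b :=
    (hcont.pow 2).intervalIntegrable_of_Icc hab
  have hint_f : IntervalIntegrable (fun t => c ^ 2 * f t ^ 2) volume a b :=
    (continuousOn_const.mul (hfc.pow 2)).intervalIntegrable_of_Icc hab
  have hint_rest : IntervalIntegrable (fun t => (f' t - m t * f t) ^ 2) volume a b :=
    ((hcont.sub (hmc.mul hfc)).pow 2).intervalIntegrable_of_Icc hab
  have hftc := integral_eq_sub_of_hasDerivAt hF ((hint_f'.sub hint_f).sub hint_rest)
  simp only [m, sub_self, mul_zero, tan_zero, zero_mul, hfa, ne_eq, OfNat.ofNat_ne_zero,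
    not_false_eq_true, zero_pow] at hftc
  rw [integral_sub (hint_f'.sub hint_f) hint_rest, integral_sub hint_f' hint_f,
    intervalIntegral.integral_const_mul] at hftc
  have hnonneg : 0 ≤ ∫ t in a..b, (f' t - m t * f t) ^ 2 :=
    integral_nonneg hab fun t _ => sq_nonneg _
  linarith

/-- Let `c ↑ π / (2 (b - a))` in the previous estimate. -/
theorem pi_sq_mul_integral_sq_le_of_left_eq_zero (hab : a ≤ b)
    (hderiv : ∀ t ∈ Icc a b, HasDerivAt f (f' t) t) (hcont : ContinuousOn f' (Icc a b))
    (hfa : f a = 0) :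
    π ^ 2 * ∫ t in a..b, f t ^ 2 ≤ (2 * (b - a)) ^ 2 * ∫ t in a..b, f' t ^ 2 := by
  rcases hab.eq_or_lt with rfl | hlt
  · simp
  set c₀ : ℝ := π / (2 * (b - a))
  have hc₀ : 0 < c₀ := div_pos pi_pos (by linarith)
  have hlim : Tendsto (fun c : ℝ => c ^ 2 * ∫ t in a..b, f t ^ 2) (𝓝[<] c₀)
      (𝓝 (c₀ ^ 2 * ∫ t in a..b, f t ^ 2)) :=
    ((continuous_pow 2).mul continuous_const).tendsto c₀ |>.mono_left nhdsWithin_le_nhds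
  have hle : c₀ ^ 2 * ∫ t in a..b, f t ^ 2 ≤ ∫ t in a..b, f' t ^ 2 := by
    refine le_of_tendsto hlim ?_
    filter_upwards [Ioo_mem_nhdsLT hc₀] with c hc
    refine sq_mul_integral_sq_le_of_left_eq_zero hab hderiv hcont hfa hc.1 ?_
    calc c * (b - a) < c₀ * (b - a) := mul_lt_mul_of_pos_right hc.2 (by linarith)
      _ = π / 2 := by simp only [c₀]; field_simp
  rw [div_pow, div_mul_eq_mul_div, div_le_iff₀ (by positivity)] at hle
  linarith

theorem pi_sq_mul_integral_sq_le_of_right_eq_zero (hab : a ≤ b)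
    (hderiv : ∀ t ∈ Icc a b, HasDerivAt f (f' t) t) (hcont : ContinuousOn f' (Icc a b))
    (hfb : f b = 0) :
    π ^ 2 * ∫ t in a..b, f t ^ 2 ≤ (2 * (b - a)) ^ 2 * ∫ t in a..b, f' t ^ 2 := by
  have hmem : MapsTo (fun t => a + b - t) (Icc a b) (Icc a b) := fun t ht =>
    ⟨by linarith [ht.2], by linarith [ht.1]⟩
  have hreflect := pi_sq_mul_integral_sq_le_of_left_eq_zero (f := fun t => f (a + b - t))
    (f' := fun t => -f' (a + b - t)) hab
    (fun t ht => by simpa using (hderiv _ (hmem ht)).comp_const_sub (a + b) t)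
    (hcont.comp (continuous_const.sub continuous_id).continuousOn hmem).neg
    (by simpa using hfb)
  simp only [neg_sq] at hreflect
  rwa [integral_comp_sub_left (fun t => f t ^ 2), integral_comp_sub_left (fun t => f' t ^ 2),
    add_sub_cancel_right, add_sub_cancel_left] at hreflect

theorem integral_sq_le_of_eq_zero_of_mem {c δ : ℝ} (hac : a ≤ c) (hcb : c ≤ b)
    (hδa : 2 * (c - a) ≤ δ) (hδb : 2 * (b - c) ≤ δ)
    (hderiv : ∀ t ∈ Icc a b, HasDerivAt f (f' t) t) (hcont : ContinuousOn f' (Icc a b))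
    (hfc : f c = 0) :
    ∫ t in a..b, f t ^ 2 ≤ δ ^ 2 / π ^ 2 * ∫ t in a..b, f' t ^ 2 := by
  have hsub_left : Icc a c ⊆ Icc a b := Icc_subset_Icc le_rfl hcb
  have hsub_right : Icc c b ⊆ Icc a b := Icc_subset_Icc hac le_rfl
  have hleft := pi_sq_mul_integral_sq_le_of_right_eq_zero hac
    (fun t ht => hderiv t (hsub_left ht)) (hcont.mono hsub_left) hfc
  have hright := pi_sq_mul_integral_sq_le_of_left_eq_zero hcb
    (fun t ht => hderiv t (hsub_right ht)) (hcont.mono hsub_right) hfc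
  have hfcont : ContinuousOn f (Icc a b) := fun t ht =>
    (hderiv t ht).continuousAt.continuousWithinAt
  have hint {g : ℝ → ℝ} (hg : ContinuousOn g (Icc a b)) :
      ∫ t in a..b, g t ^ 2 = (∫ t in a..c, g t ^ 2) + ∫ t in c..b, g t ^ 2 :=
    (integral_add_adjacent_intervals (((hg.mono hsub_left).pow 2).intervalIntegrable_of_Icc hac)
      (((hg.mono hsub_right).pow 2).intervalIntegrable_of_Icc hcb)).symm
  have hδ_left : (2 * (c - a)) ^ 2 ≤ δ ^ 2 := pow_le_pow_left₀ (by linarith) hδa 2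
  have hδ_right : (2 * (b - c)) ^ 2 ≤ δ ^ 2 := pow_le_pow_left₀ (by linarith) hδb 2
  have hnonneg_left : 0 ≤ ∫ t in a..c, f' t ^ 2 := integral_nonneg hac fun t _ => sq_nonneg _
  have hnonneg_right : 0 ≤ ∫ t in c..b, f' t ^ 2 := integral_nonneg hcb fun t _ => sq_nonneg _
  rw [div_mul_eq_mul_div, le_div_iff₀ (by positivity), mul_comm, hint hfcont, hint hcont]
  nlinarith [mul_le_mul_of_nonneg_right hδ_left hnonneg_left,
    mul_le_mul_of_nonneg_right hδ_right hnonneg_right]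

end Wirtinger

theorem sum_integral_sq_sub_node_le {r : ℕ} {x y : ℕ → ℝ} {δ : ℝ} {f f' : ℝ → ℝ}
    (hx : ∀ i ≤ r, x i ≤ x (i + 1)) (hδ : ∀ i ≤ r, x (i + 1) - x i ≤ δ)
    (hy : ∀ i ≤ r, y i = (x i + x (i + 1)) / 2)
    (hderiv : ∀ t ∈ Icc (y 0) (y r), HasDerivAt f (f' t) t)
    (hcont : ContinuousOn f' (Icc (y 0) (y r))) :
    ∑ i ∈ Finset.range r, ∫ t in y i..y (i + 1), (f t - f (x (i + 1))) ^ 2 ≤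
      δ ^ 2 / π ^ 2 * ∫ t in y 0..y r, f' t ^ 2 := by
  have hymono : MonotoneOn y (Iic r) := by
    refine monotoneOn_of_le_succ ordConnected_Iic fun i _ _ hi => ?_
    simp only [Order.succ_eq_add_one, mem_Iic] at hi ⊢
    rw [hy i (by omega), hy (i + 1) hi]
    linarith [hx i (by omega), hx (i + 1) hi]
  have hcell : ∀ i < r, Icc (y i) (y (i + 1)) ⊆ Icc (y 0) (y r) := fun i hi =>
    Icc_subset_Icc (hymono (mem_Iic.2 r.zero_le) (mem_Iic.2 hi.le) (Nat.zero_le i))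
      (hymono (mem_Iic.2 hi) (mem_Iic.2 le_rfl) hi)
  calc ∑ i ∈ Finset.range r, ∫ t in y i..y (i + 1), (f t - f (x (i + 1))) ^ 2
      ≤ ∑ i ∈ Finset.range r, δ ^ 2 / π ^ 2 * ∫ t in y i..y (i + 1), f' t ^ 2 := by
        refine Finset.sum_le_sum fun i hi => ?_
        have hi : i < r := Finset.mem_range.1 hi
        have hyi := hy i hi.le
        have hyi' := hy (i + 1) hi
        refine integral_sq_le_of_eq_zero_of_mem (c := x (i + 1)) ?_ ?_ ?_ ?_
          (fun t ht => (hderiv t (hcell i hi ht)).sub_const _) (hcont.mono (hcell i hi))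
          (sub_self _)
        all_goals linarith [hx i hi.le, hx (i + 1) hi, hδ i hi.le, hδ (i + 1) hi]
    _ = δ ^ 2 / π ^ 2 * ∫ t in y 0..y r, f' t ^ 2 := by
        rw [← Finset.mul_sum, sum_integral_adjacent_intervals (f := fun t => f' t ^ 2) fun i hi =>
          ((hcont.mono (hcell i hi)).pow 2).intervalIntegrable_of_Icc
            (hymono (mem_Iic.2 hi.le) (mem_Iic.2 hi) i.le_succ)]

theorem local_wirtinger_quadrature_general (r : ℕ) (x y : ℕ → ℝ) (δ : ℝ)
    (hmono : ∀ j, 1 ≤ j → j < r → x j < x (j + 1))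
    (hx1 : x 1 = 0) (hxr : x r = 1)
    (hx0 : x 0 = -x 1) (hxr1 : x (r + 1) = 2 - x r)
    (hy : ∀ j ≤ r, y j = (x j + x (j + 1)) / 2)
    (hδ : ∀ j ≤ r, x (j + 1) - x j ≤ δ)
    (p p' : ℝ → ℝ)
    (hderiv : ∀ t ∈ Set.Icc (0:ℝ) 1, HasDerivAt p (p' t) t)
    (hcont : ContinuousOn p' (Set.Icc (0:ℝ) 1)) :
    ∑ j ∈ Finset.Icc 1 r, (∫ t in (y (j - 1))..(y j), (p t - p (x j)) ^ 2) ≤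
      δ ^ 2 / Real.pi ^ 2 * ∫ t in (0:ℝ)..1, (p' t) ^ 2 := by
  have hx0' : x 0 = 0 := by rw [hx0, hx1, neg_zero]
  have hstep : ∀ j ≤ r, x j ≤ x (j + 1) := by
    intro j hj
    rcases j.eq_zero_or_pos with rfl | hj0
    · rw [hx0', hx1]
    rcases hj.lt_or_eq with hjr | rfl
    · exact (hmono j hj0 hjr).le
    · rw [hxr1, hxr]; norm_num
  have hy0 : y 0 = 0 := by rw [hy 0 r.zero_le, hx0', hx1]; norm_num
  have hyr : y r = 1 := by rw [hy r le_rfl, hxr1, hxr]; norm_num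
  rw [← Finset.Ico_add_one_right_eq_Icc, Finset.sum_Ico_eq_sum_range]
  simpa [add_comm 1, hy0, hyr] using
    sum_integral_sq_sub_node_le (f := p) hstep hδ hy (by rwa [hy0, hyr]) (by rwa [hy0, hyr])

/-- Local Wirtinger estimate for quadrature: for `p ∈ C¹([0,1])` and the midpoints
`y_j = (x_j + x_{j+1})/2`,
`Σ_j ∫_{y_{j−1}}^{y_j} |p(t) − p(x_j)|² dt ≤ (δ²/π²) ∫_0^1 |p'(t)|² dt`. -/
theorem local_wirtinger_quadrature (r : ℕ) (x y : ℕ → ℝ) (δ : ℝ) (hr : 1 ≤ r)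
    (hmono : ∀ j, 1 ≤ j → j < r → x j < x (j + 1))
    (hx1 : x 1 = 0) (hxr : x r = 1)
    (hx0 : x 0 = -x 1) (hxr1 : x (r + 1) = 2 - x r)
    (hy : ∀ j ≤ r, y j = (x j + x (j + 1)) / 2)
    (hδ : ∀ j ≤ r, x (j + 1) - x j ≤ δ)
    (p p' : ℝ → ℝ)
    (hderiv : ∀ t ∈ Set.Icc (0:ℝ) 1, HasDerivAt p (p' t) t)
    (hcont : ContinuousOn p' (Set.Icc (0:ℝ) 1)) :
    ∑ j ∈ Finset.Icc 1 r, (∫ t in (y (j - 1))..(y j), (p t - p (x j)) ^ 2) ≤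
      δ ^ 2 / Real.pi ^ 2 * ∫ t in (0:ℝ)..1, (p' t) ^ 2 :=
  local_wirtinger_quadrature_general r x y δ hmono hx1 hxr hx0 hxr1 hy hδ p p' hderiv hcont
end

section
/- Kronecker diagonalization of block Toeplitz+Hankel matrices: if B is an mn×mn block matrix whose (k,l)-th block is B^{(|k−l|)} + B^{(k+l mod reflection)} where each B^{(j)} is an m×m Toeplitz+Hankel matrix of the form toep(b) + J toep(Jb) (so each block is DCT-I-diagonalizable), and the block structure is itself of symmetric Toeplitz-plus-Hankel type, then B is diagonalized by the two-dimensional DCT-I, i.e., (C_n ⊗ C_m)^T B (C_n ⊗ C_m) is diagonal. -/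
/-!
Let `V_m = (cos (π j t / (m - 1)))_{j,t}` be the unnormalised DCT-I matrix, with columns `v_t`.
The product formula `cos ((k - l) θ) + cos ((k + l) θ) = 2 cos (k θ) cos (l θ)`, together with the
evenness and `2π`-periodicity of the cosine, says that the Toeplitz-plus-Hankel matrix generated
by `v_t` is `2 v_t v_tᵀ`. The columns of `V_m` are orthogonal for the trapezoidal weights
`(1, 2, …, 2, 1)` (the product formula again, plus a telescoping sum), so `V_m` is invertible and
`C_mᵀ V_m` is diagonal. Expanding `b = ∑ γ_{tu} v_t ⊗ v_u` then gives
`B = (V_n ⊗ V_m) diag (4 γ) (V_n ⊗ V_m)ᵀ`, which `C_n ⊗ C_m` diagonalises.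
-/

open Real Matrix Finset
open scoped Kronecker

theorem Matrix.IsDiag.transpose_mul_mul_diagonal_mul_transpose_mul {ι R : Type*} [Fintype ι]
    [DecidableEq ι] [CommSemiring R] {C V : Matrix ι ι R} (h : (Cᵀ * V).IsDiag) (d : ι → R) :
    (Cᵀ * (V * diagonal d * Vᵀ) * C).IsDiag := by
  have e : Cᵀ * (V * diagonal d * Vᵀ) * C = (Cᵀ * V) * diagonal d * (Cᵀ * V)ᵀ := by
    simp only [transpose_mul, transpose_transpose, Matrix.mul_assoc]
  rw [e, ← h.diagonal_diag, diagonal_transpose, diagonal_mul_diagonal, diagonal_mul_diagonal]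
  exact isDiag_diagonal _

def toeplitzIndex (k l : ℕ) : ℕ := ((k : ℤ) - l).natAbs

/-- `k + l` reflected into `[0, m - 1]`. -/
def hankelIndex (m k l : ℕ) : ℕ := m - 1 - (((m : ℤ) - 1) - k - l).natAbs

noncomputable def dctCos (m j t : ℕ) : ℝ := cos (π * j * t / ((m : ℝ) - 1))

def dctWeight (m k : ℕ) : ℝ := if k = 0 ∨ k = m - 1 then 1 else 2

theorem dctCos_comm (m j t : ℕ) : dctCos m j t = dctCos m t j := by
  rw [dctCos, dctCos, mul_right_comm]

theorem dctCos_toeplitzIndex (m k l t : ℕ) :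
    dctCos m (toeplitzIndex k l) t = cos (π * ((k : ℝ) - l) * t / ((m : ℝ) - 1)) := by
  rcases le_total l k with h | h
  · rw [dctCos, toeplitzIndex, show ((k : ℤ) - l).natAbs = k - l by omega, Nat.cast_sub h]
  · rw [dctCos, toeplitzIndex, show ((k : ℤ) - l).natAbs = l - k by omega, Nat.cast_sub h,
      ← cos_neg]
    ring_nf

theorem dctCos_hankelIndex {m k l : ℕ} (hk : k < m) (hl : l < m) (t : ℕ) :
    dctCos m (hankelIndex m k l) t = cos (π * ((k : ℝ) + l) * t / ((m : ℝ) - 1)) := by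
  rcases le_or_gt (k + l) (m - 1) with h | h
  · rw [dctCos, hankelIndex, show m - 1 - (((m : ℤ) - 1) - k - l).natAbs = k + l by omega,
      Nat.cast_add]
  · have hm : (m : ℝ) - 1 ≠ 0 := by
      rw [sub_ne_zero]; exact_mod_cast (show m ≠ 1 by omega)
    have hidx : (hankelIndex m k l : ℝ) = 2 * ((m : ℝ) - 1) - (k + l) := by
      rw [hankelIndex, show m - 1 - (((m : ℤ) - 1) - k - l).natAbs = 2 * (m - 1) - (k + l) by
        omega, Nat.cast_sub (by omega), Nat.cast_mul, Nat.cast_sub (by omega)]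
      push_cast
      ring
    rw [dctCos, hidx, ← cos_nat_mul_two_pi_sub _ t]
    congr 1
    field_simp
    ring

theorem dctCos_toeplitzIndex_add_dctCos_hankelIndex {m k l : ℕ} (hk : k < m) (hl : l < m)
    (t : ℕ) :
    dctCos m (toeplitzIndex k l) t + dctCos m (hankelIndex m k l) t =
      2 * dctCos m k t * dctCos m l t := by
  set θ : ℕ → ℝ := fun j => π * j * t / ((m : ℝ) - 1)
  rw [dctCos_toeplitzIndex, dctCos_hankelIndex hk hl,
    show π * ((k : ℝ) - l) * t / ((m : ℝ) - 1) = θ k - θ l by simp only [θ]; ring,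
    show π * ((k : ℝ) + l) * t / ((m : ℝ) - 1) = θ k + θ l by simp only [θ]; ring,
    cos_sub, cos_add, dctCos, dctCos]
  ring

theorem sum_range_succ_trapezoid_mul {R : Type*} [CommSemiring R] {N : ℕ} (hN : 0 < N)
    (f : ℕ → R) :
    ∑ k ∈ range (N + 1), (if k = 0 ∨ k = N then 1 else 2) * f k =
      ∑ k ∈ range N, (f k + f (k + 1)) := by
  obtain ⟨M, rfl⟩ : ∃ M, N = M + 1 := ⟨N - 1, by omega⟩
  have hmid : ∀ k ∈ range M, (if k + 1 = 0 ∨ k + 1 = M + 1 then (1 : R) else 2) * f (k + 1) =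
      f (k + 1) + f (k + 1) := fun k hk => by
    rw [if_neg (by have := mem_range.mp hk; omega)]
    ring
  rw [sum_range_succ, sum_range_succ', sum_congr rfl hmid, sum_add_distrib, sum_add_distrib,
    sum_range_succ', sum_range_succ _ M, if_pos (Or.inl rfl), if_pos (Or.inr rfl)]
  ring

theorem sum_dctWeight_mul_dctCos_eq_zero {m j : ℕ} (hj0 : 0 < j) (hj : j < 2 * (m - 1)) :
    ∑ k : Fin m, dctWeight m k * dctCos m j k = 0 := by
  obtain ⟨N, rfl⟩ : ∃ N, m = N + 1 := ⟨m - 1, by omega⟩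
  rw [Nat.add_sub_cancel] at hj
  have hN : (0 : ℝ) < N := by exact_mod_cast (show 0 < N by omega)
  set x := π * j / N with hx
  have hcos : ∀ k : ℕ, dctCos (N + 1) j k = cos (k * x) := fun k => by
    rw [dctCos, hx]; push_cast; ring_nf
  have hsin : sin (x / 2) ≠ 0 := by
    refine (sin_pos_of_pos_of_lt_pi (by positivity) ?_).ne'
    rw [hx, div_div, div_lt_iff₀ (by positivity)]
    have : (j : ℝ) < 2 * N := by exact_mod_cast hj
    nlinarith [pi_pos]
  -- after multiplying by `sin (x / 2)` the sum telescopes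
  have hstep : ∀ k : ℕ, sin (x / 2) * (cos (k * x) + cos ((k + 1 : ℕ) * x)) =
      cos (x / 2) * (sin ((k + 1 : ℕ) * x) - sin (k * x)) := fun k => by
    rw [cos_add_cos, sin_sub_sin]
    push_cast
    rw [show (k * x - (k + 1) * x) / 2 = -(x / 2) by ring,
      show ((k + 1) * x - k * x) / 2 = x / 2 by ring, cos_neg, add_comm ((k : ℝ) * x)]
    ring
  rw [Fin.sum_univ_eq_sum_range (fun k => dctWeight (N + 1) k * dctCos (N + 1) j k)]
  simp only [dctWeight, Nat.add_sub_cancel, hcos]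
  rw [sum_range_succ_trapezoid_mul (by omega)]
  refine (mul_eq_zero.mp ?_).resolve_left hsin
  rw [mul_sum, sum_congr rfl fun k _ => hstep k, ← mul_sum,
    sum_range_sub (fun k : ℕ => sin (k * x)), show (N : ℝ) * x = j * π by rw [hx]; field_simp,
    sin_nat_mul_pi]
  simp

theorem sum_dctWeight_mul_dctCos_mul_dctCos_eq_zero {m l t : ℕ} (hl : l < m) (ht : t < m)
    (hlt : l ≠ t) :
    ∑ k : Fin m, dctWeight m k * (dctCos m k l * dctCos m k t) = 0 := by
  have hfold : ∀ k : ℕ, dctCos m k l * dctCos m k t =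
      (dctCos m (toeplitzIndex l t) k + dctCos m (hankelIndex m l t) k) / 2 := fun k => by
    rw [dctCos_toeplitzIndex_add_dctCos_hankelIndex hl ht, dctCos_comm m k l, dctCos_comm m k t]
    ring
  simp only [hfold, mul_div, mul_add, ← sum_div, sum_add_distrib]
  rw [sum_dctWeight_mul_dctCos_eq_zero, sum_dctWeight_mul_dctCos_eq_zero, add_zero, zero_div]
  all_goals simp only [toeplitzIndex, hankelIndex]; omega

noncomputable def cosMatrix (m : ℕ) : Matrix (Fin m) (Fin m) ℝ := of fun j t => dctCos m j t

@[simp]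
theorem cosMatrix_apply (m : ℕ) (j t : Fin m) : cosMatrix m j t = dctCos m j t := rfl

theorem isDiag_cosMatrix_transpose_mul_diagonal_mul_cosMatrix (m : ℕ) :
    ((cosMatrix m)ᵀ * diagonal (fun k : Fin m => dctWeight m k) * cosMatrix m).IsDiag := by
  intro l t hlt
  rw [← sum_dctWeight_mul_dctCos_mul_dctCos_eq_zero l.isLt t.isLt (Fin.val_ne_of_ne hlt),
    mul_apply]
  simp only [mul_diagonal, transpose_apply, cosMatrix_apply]
  exact sum_congr rfl fun k _ => by ring

theorem det_cosMatrix_ne_zero (m : ℕ) : (cosMatrix m).det ≠ 0 := by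
  have hG := isDiag_cosMatrix_transpose_mul_diagonal_mul_cosMatrix m
  have hpos : ∀ t : Fin m,
      1 ≤ ((cosMatrix m)ᵀ * diagonal (fun k : Fin m => dctWeight m k) * cosMatrix m) t t := by
    intro t
    let k₀ : Fin m := ⟨0, t.pos⟩
    have hterm : ∀ k : Fin m, 0 ≤ dctWeight m k * cosMatrix m k t ^ 2 := fun k => by
      unfold dctWeight; split_ifs <;> positivity
    calc (1 : ℝ) = dctWeight m k₀ * cosMatrix m k₀ t ^ 2 := by
          simp [k₀, dctWeight, cosMatrix, dctCos]
      _ ≤ ∑ k : Fin m, dctWeight m k * cosMatrix m k t ^ 2 :=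
          single_le_sum (fun k _ => hterm k) (mem_univ k₀)
      _ = _ := by
          rw [mul_apply]
          simp only [mul_diagonal, transpose_apply]
          exact sum_congr rfl fun k _ => by ring
  intro h0
  have hdet := congrArg det hG.diagonal_diag
  rw [det_diagonal, det_mul, det_mul, h0, mul_zero] at hdet
  exact prod_ne_zero_iff.mpr (fun t _ => (zero_lt_one.trans_le (hpos t)).ne') hdet

theorem isDiag_transpose_mul_cosMatrix {m : ℕ} {C : Matrix (Fin m) (Fin m) ℝ} (c : ℝ)
    (hC : ∀ k l : Fin m, C k l = dctWeight m k / c * dctCos m k l) :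
    (Cᵀ * cosMatrix m).IsDiag := by
  have hC' : C = c⁻¹ • (diagonal (fun k : Fin m => dctWeight m k) * cosMatrix m) := by
    ext k l
    rw [hC, Matrix.smul_apply, diagonal_mul, cosMatrix_apply, smul_eq_mul]
    ring
  rw [hC', transpose_smul, smul_mul, transpose_mul, diagonal_transpose]
  exact (isDiag_cosMatrix_transpose_mul_diagonal_mul_cosMatrix m).smul _

noncomputable def cosSeries {m n : ℕ} (γ : Matrix (Fin n) (Fin m) ℝ) (j i : ℕ) : ℝ :=
  ∑ t, ∑ u, γ t u * dctCos n j t * dctCos m i u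

theorem exists_eq_cosSeries (m n : ℕ) (b : ℕ → ℕ → ℝ) :
    ∃ γ : Matrix (Fin n) (Fin m) ℝ, ∀ j < n, ∀ i < m, b j i = cosSeries γ j i := by
  set β : Matrix (Fin n) (Fin m) ℝ := of fun j i => b j i
  have hVn : IsUnit (cosMatrix n).det := isUnit_iff_ne_zero.mpr (det_cosMatrix_ne_zero n)
  have hVm : IsUnit (cosMatrix m)ᵀ.det := by
    rw [det_transpose]; exact isUnit_iff_ne_zero.mpr (det_cosMatrix_ne_zero m)
  have hβ : cosMatrix n * ((cosMatrix n)⁻¹ * β * ((cosMatrix m)ᵀ)⁻¹) * (cosMatrix m)ᵀ = β := by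
    rw [Matrix.mul_assoc (cosMatrix n)⁻¹ β, mul_nonsing_inv_cancel_left _ _ hVn,
      nonsing_inv_mul_cancel_right _ _ hVm]
  set γ := (cosMatrix n)⁻¹ * β * ((cosMatrix m)ᵀ)⁻¹
  refine ⟨γ, fun j hj i hi => ?_⟩
  have := congr_fun₂ hβ ⟨j, hj⟩ ⟨i, hi⟩
  simp only [β, of_apply, mul_apply, transpose_apply, cosMatrix_apply, sum_mul] at this
  rw [← this, sum_comm, cosSeries]
  exact sum_congr rfl fun t _ => sum_congr rfl fun u _ => by ring

def blockToeplitzHankel (m n : ℕ) (b : ℕ → ℕ → ℝ) : Matrix (Fin n × Fin m) (Fin n × Fin m) ℝ :=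
  of fun p q =>
    b (toeplitzIndex p.1 q.1) (toeplitzIndex p.2 q.2) +
      b (toeplitzIndex p.1 q.1) (hankelIndex m p.2 q.2) +
      b (hankelIndex n p.1 q.1) (toeplitzIndex p.2 q.2) +
      b (hankelIndex n p.1 q.1) (hankelIndex m p.2 q.2)

theorem blockToeplitzHankel_congr {m n : ℕ} {b b' : ℕ → ℕ → ℝ}
    (h : ∀ j < n, ∀ i < m, b j i = b' j i) :
    blockToeplitzHankel m n b = blockToeplitzHankel m n b' := by
  have hT : ∀ {m : ℕ} (k l : Fin m), toeplitzIndex k l < m := fun k l => by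
    unfold toeplitzIndex; omega
  have hH : ∀ {m : ℕ} (k l : Fin m), hankelIndex m k l < m := fun k l => by
    unfold hankelIndex; omega
  ext p q
  simp only [blockToeplitzHankel, of_apply]
  rw [h _ (hT _ _) _ (hT _ _), h _ (hT _ _) _ (hH _ _), h _ (hH _ _) _ (hT _ _),
    h _ (hH _ _) _ (hH _ _)]

theorem blockToeplitzHankel_cosSeries {m n : ℕ} (γ : Matrix (Fin n) (Fin m) ℝ) :
    blockToeplitzHankel m n (cosSeries γ) =
      (cosMatrix n ⊗ₖ cosMatrix m) * diagonal (fun p => 4 * γ p.1 p.2) *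
        (cosMatrix n ⊗ₖ cosMatrix m)ᵀ := by
  ext p q
  have hfold₁ := dctCos_toeplitzIndex_add_dctCos_hankelIndex p.1.isLt q.1.isLt
  have hfold₂ := dctCos_toeplitzIndex_add_dctCos_hankelIndex p.2.isLt q.2.isLt
  rw [mul_apply, Fintype.sum_prod_type]
  simp only [blockToeplitzHankel, cosSeries, of_apply, ← sum_add_distrib, mul_diagonal,
    transpose_apply, kroneckerMap_apply, cosMatrix_apply]
  refine sum_congr rfl fun t _ => sum_congr rfl fun u _ => ?_
  calc _ = γ t u * ((dctCos n (toeplitzIndex p.1 q.1) t + dctCos n (hankelIndex n p.1 q.1) t) *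
        (dctCos m (toeplitzIndex p.2 q.2) u + dctCos m (hankelIndex m p.2 q.2) u)) := by ring
    _ = _ := by rw [hfold₁, hfold₂]; ring

theorem kronecker_dct1_diagonalizes_block_toeplitz_hankel_general (m n : ℕ)
    (Cm : Matrix (Fin m) (Fin m) ℝ) (Cn : Matrix (Fin n) (Fin n) ℝ)
    (hCm : ∀ k l : Fin m, Cm k l =
      (if (k : ℕ) = 0 ∨ (k : ℕ) = m - 1 then 1 else 2) / Real.sqrt (2 * m - 2) *
        Real.cos (Real.pi * k * l / (m - 1)))
    (hCn : ∀ k l : Fin n, Cn k l =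
      (if (k : ℕ) = 0 ∨ (k : ℕ) = n - 1 then 1 else 2) / Real.sqrt (2 * n - 2) *
        Real.cos (Real.pi * k * l / (n - 1)))
    (b : ℕ → ℕ → ℝ)
    (B : Matrix (Fin n × Fin m) (Fin n × Fin m) ℝ)
    (hB : ∀ p q : Fin n × Fin m, B p q =
      b (((p.1 : ℕ) : ℤ) - ((q.1 : ℕ) : ℤ)).natAbs (((p.2 : ℕ) : ℤ) - ((q.2 : ℕ) : ℤ)).natAbs +
      b (((p.1 : ℕ) : ℤ) - ((q.1 : ℕ) : ℤ)).natAbs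
        (m - 1 - (((m : ℤ) - 1) - (p.2 : ℕ) - (q.2 : ℕ)).natAbs) +
      b (n - 1 - (((n : ℤ) - 1) - (p.1 : ℕ) - (q.1 : ℕ)).natAbs)
        (((p.2 : ℕ) : ℤ) - ((q.2 : ℕ) : ℤ)).natAbs +
      b (n - 1 - (((n : ℤ) - 1) - (p.1 : ℕ) - (q.1 : ℕ)).natAbs)
        (m - 1 - (((m : ℤ) - 1) - (p.2 : ℕ) - (q.2 : ℕ)).natAbs)) :
    ∃ d : Fin n × Fin m → ℝ,
      (Matrix.kroneckerMap (· * ·) Cn Cm)ᵀ * B * Matrix.kroneckerMap (· * ·) Cn Cm =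
        Matrix.diagonal d := by
  obtain ⟨γ, hγ⟩ := exists_eq_cosSeries m n b
  have hBV : B = (cosMatrix n ⊗ₖ cosMatrix m) * diagonal (fun p => 4 * γ p.1 p.2) *
      (cosMatrix n ⊗ₖ cosMatrix m)ᵀ := by
    rw [← blockToeplitzHankel_cosSeries, ← blockToeplitzHankel_congr hγ]
    exact Matrix.ext hB
  have hCV : ((Cn ⊗ₖ Cm)ᵀ * (cosMatrix n ⊗ₖ cosMatrix m)).IsDiag := by
    rw [← kroneckerMap_transpose, ← mul_kronecker_mul]
    exact (isDiag_transpose_mul_cosMatrix _ hCn).kronecker (isDiag_transpose_mul_cosMatrix _ hCm)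
  rw [hBV]
  exact ⟨_, (hCV.transpose_mul_mul_diagonal_mul_transpose_mul _).diagonal_diag.symm⟩

/-- Kronecker diagonalization of block Toeplitz+Hankel matrices: if `B` is the block
matrix whose `(k,l)` block is `B^{(|k−l|)} + B^{(σ_n(k,l))}` (block Toeplitz plus block
Hankel pattern, with `σ_n(k,l) = n−1−|n−1−k−l|`) and each block
`B^{(j)} = toep(b_j) + J·toep(J b_j)` is itself an `m×m` Toeplitz+Hankel matrix (entries
`b_j(|i−i'|) + b_j(σ_m(i,i'))`), then `B` is diagonalized by the two-dimensional DCT-I: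
`(C_n ⊗ C_m)ᵀ B (C_n ⊗ C_m)` is diagonal. -/
theorem kronecker_dct1_diagonalizes_block_toeplitz_hankel (m n : ℕ)
    (hm : 2 ≤ m) (hn : 2 ≤ n)
    (Cm : Matrix (Fin m) (Fin m) ℝ) (Cn : Matrix (Fin n) (Fin n) ℝ)
    (hCm : ∀ k l : Fin m, Cm k l =
      (if (k : ℕ) = 0 ∨ (k : ℕ) = m - 1 then 1 else 2) / Real.sqrt (2 * m - 2) *
        Real.cos (Real.pi * k * l / (m - 1)))
    (hCn : ∀ k l : Fin n, Cn k l =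
      (if (k : ℕ) = 0 ∨ (k : ℕ) = n - 1 then 1 else 2) / Real.sqrt (2 * n - 2) *
        Real.cos (Real.pi * k * l / (n - 1)))
    (b : ℕ → ℕ → ℝ)
    (B : Matrix (Fin n × Fin m) (Fin n × Fin m) ℝ)
    (hB : ∀ p q : Fin n × Fin m, B p q =
      b (((p.1 : ℕ) : ℤ) - ((q.1 : ℕ) : ℤ)).natAbs (((p.2 : ℕ) : ℤ) - ((q.2 : ℕ) : ℤ)).natAbs +
      b (((p.1 : ℕ) : ℤ) - ((q.1 : ℕ) : ℤ)).natAbs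
        (m - 1 - (((m : ℤ) - 1) - (p.2 : ℕ) - (q.2 : ℕ)).natAbs) +
      b (n - 1 - (((n : ℤ) - 1) - (p.1 : ℕ) - (q.1 : ℕ)).natAbs)
        (((p.2 : ℕ) : ℤ) - ((q.2 : ℕ) : ℤ)).natAbs +
      b (n - 1 - (((n : ℤ) - 1) - (p.1 : ℕ) - (q.1 : ℕ)).natAbs)
        (m - 1 - (((m : ℤ) - 1) - (p.2 : ℕ) - (q.2 : ℕ)).natAbs)) :
    ∃ d : Fin n × Fin m → ℝ,
      (Matrix.kroneckerMap (· * ·) Cn Cm)ᵀ * B * Matrix.kroneckerMap (· * ·) Cn Cm =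
        Matrix.diagonal d :=
  kronecker_dct1_diagonalizes_block_toeplitz_hankel_general m n Cm Cn hCm hCn b B hB
end
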